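/- Let f in Q[[q]] be the unique solution of L1 f = 0 with constant coefficient 1. Then there exists a unique formal power series g in Q[[q]] with zero constant coefficient such that L1~(t*f + g) = 0. (t*f + g is the logarithmic solution I_1 = ln(q)*I_0 + sum b_d q^d of the Picard-Fuchs equation.) -/

import Mathlib

open PowerSeries

/-- The operator `D = q * d/dq` on `ℚ[[q]]`. -/
noncomputable def Dop (f : ℚ⟦X⟧) : ℚ⟦X⟧ := X * derivative ℚ f

/-- Coefficient of `D^4` in the Picard-Fuchs operator. -/
noncomputable def A4 : ℚ⟦X⟧ := (1 - 289 * X - 57 * X ^ 2 + X ^ 3) * (1 - 3 * X) ^ 2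
/-- Coefficient of `D^3` in the Picard-Fuchs operator. -/
noncomputable def A3 : ℚ⟦X⟧ := 4 * X * (3 * X - 1) * (143 + 57 * X - 87 * X ^ 2 + 3 * X ^ 3)
/-- Coefficient of `D^2` in the Picard-Fuchs operator. -/
noncomputable def A2 : ℚ⟦X⟧ :=
  2 * X * (-212 - 473 * X + 725 * X ^ 2 - 435 * X ^ 3 + 27 * X ^ 4)
/-- Coefficient of `D^1` in the Picard-Fuchs operator. -/
noncomputable def A1 : ℚ⟦X⟧ :=
  2 * X * (-69 - 481 * X + 159 * X ^ 2 - 171 * X ^ 3 + 18 * X ^ 4)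
/-- Coefficient of `D^0` in the Picard-Fuchs operator. -/
noncomputable def A0 : ℚ⟦X⟧ := X * (-17 - 202 * X - 8 * X ^ 2 - 54 * X ^ 3 + 9 * X ^ 4)

/-- The Picard-Fuchs operator of Rødland's mirror family of the Pfaffian
Calabi-Yau 3-fold, acting on `ℚ[[q]]` (here `q` is `PowerSeries.X`). -/
noncomputable def L1 (f : ℚ⟦X⟧) : ℚ⟦X⟧ :=
  A4 * Dop^[4] f + A3 * Dop^[3] f + A2 * Dop^[2] f + A1 * Dop f + A0 * f

/-- The extension of `D` to the derivation on `ℚ[[q]][t]` with `D t = 1`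
(where `t` plays the role of `ln q`). -/
noncomputable def Dt (y : Polynomial ℚ⟦X⟧) : Polynomial ℚ⟦X⟧ :=
  Polynomial.derivative y + y.sum fun n a => Polynomial.C (Dop a) * Polynomial.X ^ n

/-- The Picard-Fuchs operator acting on `ℚ[[q]][t]`, with `D` replaced by its
extension `Dt`. -/
noncomputable def L1t (y : Polynomial ℚ⟦X⟧) : Polynomial ℚ⟦X⟧ :=
    Polynomial.C A4 * Dt^[4] y + Polynomial.C A3 * Dt^[3] y
  + Polynomial.C A2 * Dt^[2] y + Polynomial.C A1 * Dt y + Polynomial.C A0 * y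

/-! In the basis `q^n`, `D` is diagonal with eigenvalues `n`, so `L1` acts on coefficients by a
lower-triangular matrix whose diagonal is `n^4` (the indicial polynomial of `L1` at `q = 0` is
`θ^4`). Applying `L1~` to `t f + g` gives `t · L1 f + L1 g + L1' f`, where `L1'` is the derivative
of `L1` as a polynomial in `D`; as `L1 f = 0`, the condition is `L1 g = -L1' f`. The right-hand
side has no constant term, and a triangular system with invertible diagonal entries in degrees
`n ≥ 1` has exactly one solution with `g(0) = 0`. -/

namespace PowerSeries

variable {K : Type*} [Field K]

noncomputable def forwardSubst (T : ℕ → ℕ → K) (h : K⟦X⟧) : ℕ → K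
  | n => (coeff n h - ∑ i ∈ (Finset.range n).attach, T n i * forwardSubst T h i) / T n n
  decreasing_by exact Finset.mem_range.mp i.2

theorem forwardSubst_zero (T : ℕ → ℕ → K) {h : K⟦X⟧} (h0 : constantCoeff h = 0) :
    forwardSubst T h 0 = 0 := by
  rw [forwardSubst]
  simp [h0]

theorem sum_range_succ_mul_forwardSubst (T : ℕ → ℕ → K) (h : K⟦X⟧) {n : ℕ} (hn : T n n ≠ 0) :
    ∑ i ∈ Finset.range (n + 1), T n i * forwardSubst T h i = coeff n h := by
  rw [Finset.sum_range_succ, forwardSubst, Finset.sum_attach (Finset.range n)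
    (fun i => T n i * forwardSubst T h i)]
  field_simp
  ring

variable {L : K⟦X⟧ → K⟦X⟧} {T : ℕ → ℕ → K}

theorem eq_of_triangular_of_constantCoeff_eq_zero
    (hL : ∀ g n, coeff n (L g) = ∑ i ∈ Finset.range (n + 1), T n i * coeff i g)
    (hT : ∀ n, n ≠ 0 → T n n ≠ 0) {g₁ g₂ : K⟦X⟧}
    (h₁ : constantCoeff g₁ = 0) (h₂ : constantCoeff g₂ = 0) (he : L g₁ = L g₂) : g₁ = g₂ := by
  ext n
  induction n using Nat.strong_induction_on with
  | _ n ih =>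
    rcases eq_or_ne n 0 with rfl | hn
    · simp [h₁, h₂]
    · have hcoeff := congrArg (coeff n) he
      rw [hL, hL, Finset.sum_range_succ, Finset.sum_range_succ,
        Finset.sum_congr rfl fun i hi => by rw [ih i (Finset.mem_range.mp hi)]] at hcoeff
      exact mul_left_cancel₀ (hT n hn) (add_left_cancel hcoeff)

theorem existsUnique_of_triangular
    (hL : ∀ g n, coeff n (L g) = ∑ i ∈ Finset.range (n + 1), T n i * coeff i g)
    (hT : ∀ n, n ≠ 0 → T n n ≠ 0) {h : K⟦X⟧} (h0 : constantCoeff h = 0) :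
    ∃! g : K⟦X⟧, constantCoeff g = 0 ∧ L g = h := by
  have hsol0 : constantCoeff (mk (forwardSubst T h)) = 0 := by
    simpa [← coeff_zero_eq_constantCoeff_apply] using forwardSubst_zero T h0
  have hsol : L (mk (forwardSubst T h)) = h := by
    ext n
    rcases eq_or_ne n 0 with rfl | hn
    · simp [hL, forwardSubst_zero T h0, h0]
    · simp only [hL, coeff_mk, sum_range_succ_mul_forwardSubst T h (hT n hn)]
  exact ⟨mk (forwardSubst T h), ⟨hsol0, hsol⟩, fun g ⟨hg0, hg⟩ =>
    eq_of_triangular_of_constantCoeff_eq_zero hL hT hg0 hsol0 (hg.trans hsol.symm)⟩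

end PowerSeries

theorem coeff_Dop (f : ℚ⟦X⟧) (n : ℕ) : coeff n (Dop f) = n * coeff n f := by
  cases n with
  | zero => simp [Dop]
  | succ m =>
    rw [Dop, coeff_succ_X_mul, coeff_derivative]
    push_cast
    ring

theorem coeff_iterate_Dop (j : ℕ) (f : ℚ⟦X⟧) (n : ℕ) :
    coeff n (Dop^[j] f) = (n : ℚ) ^ j * coeff n f := by
  induction j with
  | zero => simp
  | succ k ih =>
    rw [Function.iterate_succ_apply', coeff_Dop, ih]
    ring

theorem constantCoeff_iterate_Dop {j : ℕ} (hj : j ≠ 0) (f : ℚ⟦X⟧) :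
    constantCoeff (Dop^[j] f) = 0 := by
  simpa [hj] using coeff_iterate_Dop j f 0

theorem Dop_add (a b : ℚ⟦X⟧) : Dop (a + b) = Dop a + Dop b := by
  simp [Dop, mul_add]

theorem Dop_nsmul (k : ℕ) (a : ℚ⟦X⟧) : Dop (k • a) = k • Dop a := by
  rw [Dop, Dop, map_nsmul, mul_smul_comm]

theorem coeff_mul_iterate_Dop (A g : ℚ⟦X⟧) (j n : ℕ) :
    coeff n (A * Dop^[j] g) =
      ∑ i ∈ Finset.range (n + 1), coeff (n - i) A * (i : ℚ) ^ j * coeff i g := by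
  rw [mul_comm, coeff_mul, Finset.Nat.sum_antidiagonal_eq_sum_range_succ
    (fun a b => coeff a (Dop^[j] g) * coeff b A)]
  exact Finset.sum_congr rfl fun i _ => by rw [coeff_iterate_Dop]; ring

noncomputable def L1Kernel (n i : ℕ) : ℚ :=
  coeff (n - i) A4 * (i : ℚ) ^ 4 + coeff (n - i) A3 * (i : ℚ) ^ 3
    + coeff (n - i) A2 * (i : ℚ) ^ 2 + coeff (n - i) A1 * (i : ℚ) ^ 1
    + coeff (n - i) A0 * (i : ℚ) ^ 0

theorem coeff_L1 (g : ℚ⟦X⟧) (n : ℕ) :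
    coeff n (L1 g) = ∑ i ∈ Finset.range (n + 1), L1Kernel n i * coeff i g := by
  have hL1 : L1 g = A4 * Dop^[4] g + A3 * Dop^[3] g + A2 * Dop^[2] g + A1 * Dop^[1] g
      + A0 * Dop^[0] g := rfl
  simp only [hL1, map_add, coeff_mul_iterate_Dop, ← Finset.sum_add_distrib]
  exact Finset.sum_congr rfl fun i _ => by rw [L1Kernel]; ring

theorem L1Kernel_self (n : ℕ) : L1Kernel n n = (n : ℚ) ^ 4 := by
  simp [L1Kernel, A4, A3, A2, A1, A0]

theorem Dt_X_mul_C_add_C (u v : ℚ⟦X⟧) :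
    Dt (Polynomial.X * Polynomial.C u + Polynomial.C v)
      = Polynomial.X * Polynomial.C (Dop u) + Polynomial.C (u + Dop v) := by
  have hDop0 : Dop 0 = 0 := by simp [Dop]
  rw [Dt, mul_comm, Polynomial.C_mul_X_eq_monomial, ← Polynomial.monomial_zero_left,
    Polynomial.sum_add_index _ _ _ (by simp [hDop0]) (by simp [Dop_add, add_mul]),
    Polynomial.sum_monomial_index _ _ (by simp [hDop0]),
    Polynomial.sum_monomial_index _ _ (by simp [hDop0])]
  simp only [Polynomial.derivative_monomial, Polynomial.monomial_zero_left,
    Polynomial.derivative_C, tsub_self, Nat.cast_one, pow_zero, pow_one, mul_one, add_zero,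
    Polynomial.X_mul_C, map_add]
  ring

theorem iterate_Dt_X_mul_C_add_C (u v : ℚ⟦X⟧) (k : ℕ) :
    Dt^[k + 1] (Polynomial.X * Polynomial.C u + Polynomial.C v)
      = Polynomial.X * Polynomial.C (Dop^[k + 1] u)
        + Polynomial.C ((k + 1) • Dop^[k] u + Dop^[k + 1] v) := by
  induction k with
  | zero => simpa using Dt_X_mul_C_add_C u v
  | succ k ih =>
    rw [Function.iterate_succ_apply', ih, Dt_X_mul_C_add_C, Dop_add, Dop_nsmul,
      ← Function.iterate_succ_apply' Dop, ← Function.iterate_succ_apply' Dop,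
      ← Function.iterate_succ_apply' Dop]
    congr 2
    rw [succ_nsmul _ (k + 1)]
    abel

/-- The derivative `∂L1/∂D` of `L1`, viewed as a polynomial in `D` with coefficients `A_j`. -/
noncomputable def L1Deriv (f : ℚ⟦X⟧) : ℚ⟦X⟧ :=
  4 • (A4 * Dop^[3] f) + 3 • (A3 * Dop^[2] f) + 2 • (A2 * Dop^[1] f) + 1 • (A1 * Dop^[0] f)

theorem L1t_X_mul_C_add_C (f g : ℚ⟦X⟧) :
    L1t (Polynomial.X * Polynomial.C f + Polynomial.C g)
      = Polynomial.X * Polynomial.C (L1 f) + Polynomial.C (L1 g + L1Deriv f) := by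
  have hDt k := iterate_Dt_X_mul_C_add_C f g k
  rw [L1t, (hDt 3 : Dt^[4] _ = _), (hDt 2 : Dt^[3] _ = _), (hDt 1 : Dt^[2] _ = _),
    Dt_X_mul_C_add_C, L1, L1, L1Deriv]
  norm_num only [map_add, map_mul, map_nsmul, Function.iterate_zero_apply, Function.iterate_one]
  ring

theorem constantCoeff_L1Deriv (f : ℚ⟦X⟧) : constantCoeff (L1Deriv f) = 0 := by
  simp only [L1Deriv, map_add, map_nsmul, map_mul, constantCoeff_iterate_Dop three_ne_zero,
    constantCoeff_iterate_Dop two_ne_zero, constantCoeff_iterate_Dop one_ne_zero, mul_zero,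
    smul_zero, zero_add]
  simp [A1]

theorem pfaffian_logarithmic_solution_existsUnique_general (f : ℚ⟦X⟧)
    (hf : L1 f = 0) :
    ∃! g : ℚ⟦X⟧, constantCoeff g = 0 ∧
      L1t (Polynomial.X * Polynomial.C f + Polynomial.C g) = 0 := by
  have hsolves (g : ℚ⟦X⟧) :
      L1t (Polynomial.X * Polynomial.C f + Polynomial.C g) = 0 ↔ L1 g = -L1Deriv f := by
    rw [L1t_X_mul_C_add_C, hf, map_zero, mul_zero, zero_add, Polynomial.C_eq_zero,
      add_eq_zero_iff_eq_neg]
  have hdiag (n : ℕ) (hn : n ≠ 0) : L1Kernel n n ≠ 0 := by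
    rw [L1Kernel_self]
    positivity
  have hrhs : constantCoeff (-L1Deriv f) = 0 := by
    rw [map_neg, constantCoeff_L1Deriv, neg_zero]
  exact (existsUnique_congr fun g => and_congr_right' (hsolves g)).mpr
    (existsUnique_of_triangular coeff_L1 hdiag hrhs)

/-- Given the holomorphic solution `f = I₀` of the Picard-Fuchs equation, there is a
unique power series `g` with zero constant coefficient such that `t*f + g` is a
solution of the Picard-Fuchs equation on `ℚ[[q]][t]` (the logarithmic solution
`I₁ = ln(q) I₀ + Σ b_d q^d`). -/
theorem pfaffian_logarithmic_solution_existsUnique (f : ℚ⟦X⟧)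
    (hf₀ : constantCoeff f = 1) (hf : L1 f = 0) :
    ∃! g : ℚ⟦X⟧, constantCoeff g = 0 ∧
      L1t (Polynomial.X * Polynomial.C f + Polynomial.C g) = 0 :=
  pfaffian_logarithmic_solution_existsUnique_general f hf
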